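/- arXiv:1706.00809 — 2 statements merged into one kernel-verified Lean document; each statement's English description precedes it below -/
import Mathlib

section
/- Let E be a Banach space satisfying the B-condition with exponent p ∈ (1,∞), let q be the conjugate exponent (1/p + 1/q = 1), and let {e_j, f_j} be a biorthonormal basis system in E × E*. If A ∈ σ_p(E) and B ∈ σ_q(E), then the series ∑_{i=1}^∞ ⟨A e_i, B* f_i⟩ converges absolutely and |∑_{i=1}^∞ ⟨A e_i, B* f_i⟩| ≤ ‖A‖_{σ_p(E)} ‖B*‖_{σ_q(E*)}. -/
/-!
By the B-condition expansion applied to `u = A e_i` and `g = f_i ∘ B`,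
`⟨A e_i, B* f_i⟩ = ∑_j ⟨A e_i, f_j⟩ ⟨B e_j, f_i⟩`. The double series of these terms is
dominated by `∑_{i,j} |a_{ij}| |b_{ji}|`, where `a` and `b` are the matrices of `A` and `B`, and
Hölder's inequality on `ℕ × ℕ` bounds this by the `ℓ^p` norm of `a` times the `ℓ^q` norm of `b`.
-/

lemma summable_norm_and_norm_tsum_le_of_hasSum_rows {β γ G : Type*} [NormedAddCommGroup G]
    {x : β × γ → G} {s : β → G} (hrows : ∀ i, HasSum (fun j => x (i, j)) (s i))
    (hx : Summable fun ij => ‖x ij‖) :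
    Summable (fun i => ‖s i‖) ∧ ‖∑' i, s i‖ ≤ ∑' ij, ‖x ij‖ := by
  obtain ⟨hrow, hrowSums⟩ := (summable_prod_of_nonneg fun ij => norm_nonneg (x ij)).mp hx
  have hle : ∀ i, ‖s i‖ ≤ ∑' j, ‖x (i, j)‖ := fun i =>
    (hrows i).tsum_eq ▸ norm_tsum_le_tsum_norm (hrow i)
  have hs : Summable (fun i => ‖s i‖) := hrowSums.of_nonneg_of_le (fun i => norm_nonneg _) hle
  refine ⟨hs, ?_⟩
  calc ‖∑' i, s i‖ ≤ ∑' i, ‖s i‖ := norm_tsum_le_tsum_norm hs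
    _ ≤ ∑' i, ∑' j, ‖x (i, j)‖ := hs.tsum_le_tsum hle hrowSums
    _ = ∑' ij, ‖x ij‖ := (hx.tsum_prod' hrow).symm

lemma summable_and_inner_le_Lp_mul_Lq_tsum_comp_equiv {ι : Type*} {p q : ℝ}
    (hpq : p.HolderConjugate q) {a b : ι → ℝ} (ha : ∀ i, 0 ≤ a i) (hb : ∀ i, 0 ≤ b i)
    (σ : ι ≃ ι) (hap : Summable fun i => a i ^ p) (hbq : Summable fun i => b i ^ q) :
    Summable (fun i => a i * b (σ i)) ∧
      ∑' i, a i * b (σ i) ≤ (∑' i, a i ^ p) ^ (1 / p) * (∑' i, b i ^ q) ^ (1 / q) := by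
  have hbσ : Summable fun i => b (σ i) ^ q := σ.summable_iff.mpr hbq
  rw [← σ.tsum_eq fun i => b i ^ q]
  exact Real.summable_and_inner_le_Lp_mul_Lq_tsum_of_nonneg hpq ha (fun i => hb (σ i)) hap hbσ

theorem stmt4_general {E : Type*} [NormedAddCommGroup E] [NormedSpace ℂ E]
    (e : ℕ → E) (f : ℕ → StrongDual ℂ E)
    (p q : ℝ) (hp : 1 < p) (hpq : 1 / p + 1 / q = 1)
    -- B-condition:
    (hexp : ∀ (u : E) (g : StrongDual ℂ E),
      HasSum (fun j => f j u * g (e j)) (g u))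
    (A B : E →L[ℂ] E)
    (hA : Summable fun ij : ℕ × ℕ => ‖f ij.2 (A (e ij.1))‖ ^ p)
    (hB : Summable fun ij : ℕ × ℕ => ‖f ij.2 (B (e ij.1))‖ ^ q) :
    Summable (fun i => ‖f i (B (A (e i)))‖) ∧
      ‖∑' i, f i (B (A (e i)))‖ ≤
        (∑' ij : ℕ × ℕ, ‖f ij.2 (A (e ij.1))‖ ^ p) ^ (1 / p) *
          (∑' ij : ℕ × ℕ, ‖f ij.2 (B (e ij.1))‖ ^ q) ^ (1 / q) := by
  have hpq' : p.HolderConjugate q :=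
    Real.holderConjugate_iff.mpr ⟨hp, by simpa only [one_div] using hpq⟩
  obtain ⟨hsum, hholder⟩ := summable_and_inner_le_Lp_mul_Lq_tsum_comp_equiv hpq'
    (fun _ => norm_nonneg _) (fun _ => norm_nonneg _) (Equiv.prodComm ℕ ℕ) hA hB
  have hrows : ∀ i, HasSum (fun j => f j (A (e i)) * f i (B (e j))) (f i (B (A (e i)))) :=
    fun i => hexp (A (e i)) ((f i).comp B)
  obtain ⟨hdiag, hbound⟩ := summable_norm_and_norm_tsum_le_of_hasSum_rows
    (x := fun ij => f ij.2 (A (e ij.1)) * f ij.1 (B (e ij.2))) hrows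
    (by simpa only [norm_mul, Equiv.prodComm_apply, Prod.fst_swap, Prod.snd_swap] using hsum)
  exact ⟨hdiag, hbound.trans (by
    simpa only [norm_mul, Equiv.prodComm_apply, Prod.fst_swap, Prod.snd_swap] using hholder)⟩

/-- Hölder estimate for the trace pairing: if `A ∈ σ_p(E)`, `B ∈ σ_q(E)`,
`1/p + 1/q = 1`, then `∑ ⟨A e_i, B* f_i⟩` converges absolutely and is bounded by
`‖A‖_{σ_p} ‖B*‖_{σ_q}`. Here `⟨A e_i, B* f_i⟩ = f_i (B (A e_i))`. -/
theorem stmt4 {E : Type*} [NormedAddCommGroup E] [NormedSpace ℂ E]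
    (e : ℕ → E) (f : ℕ → StrongDual ℂ E)
    (hbi : ∀ i j, f i (e j) = if i = j then 1 else 0)
    (hne : ∀ j, ‖e j‖ = 1) (hnf : ∀ j, ‖f j‖ = 1)
    (p q C : ℝ) (hp : 1 < p) (hq : 1 < q) (hpq : 1 / p + 1 / q = 1) (hC : 0 < C)
    -- B-condition:
    (hexp : ∀ (u : E) (g : StrongDual ℂ E),
      HasSum (fun j => f j u * g (e j)) (g u))
    (hBcond : ∀ u : E, ‖u‖ ^ p ≤ C * ∑' j, ‖f j u‖ ^ p)
    (A B : E →L[ℂ] E)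
    (hA : Summable fun ij : ℕ × ℕ => ‖f ij.2 (A (e ij.1))‖ ^ p)
    (hB : Summable fun ij : ℕ × ℕ => ‖f ij.2 (B (e ij.1))‖ ^ q) :
    Summable (fun i => ‖f i (B (A (e i)))‖) ∧
      ‖∑' i, f i (B (A (e i)))‖ ≤
        (∑' ij : ℕ × ℕ, ‖f ij.2 (A (e ij.1))‖ ^ p) ^ (1 / p) *
          (∑' ij : ℕ × ℕ, ‖f ij.2 (B (e ij.1))‖ ^ q) ^ (1 / q) :=
  stmt4_general e f p q hp hpq hexp A B hA hB
end

section
/- Let E be a Banach space satisfying the B-condition, p ∈ (1,∞), 1/p + 1/q = 1, A ∈ σ_p(E) and B ∈ σ_q(E), and {e_j, f_j} a biorthonormal basis system in E × E*. Then ∑_{i=1}^∞ ⟨A e_i, B* f_i⟩ = ∑_{i=1}^∞ ⟨B e_i, A* f_i⟩; that is, the bilinear trace Tr(A,B) is symmetric in A and B. -/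
/-! Expanding `B (A e_i)` and `A (B e_j)` along the basis turns both traces into the two iterated
sums of the double series `∑_{i,j} ⟨A e_i, f_j⟩ ⟨B e_j, f_i⟩`. By Hölder's inequality this series
is absolutely summable, since `(⟨A e_i, f_j⟩)` is in `ℓ^p` and `(⟨B e_j, f_i⟩)` in `ℓ^q`, so Fubini
lets the two summations be interchanged. -/

theorem summable_mul_of_summable_norm_rpow {ι R : Type*} [NormedRing R] [CompleteSpace R]
    {p q : ℝ} (hpq : p.HolderConjugate q) {x y : ι → R}
    (hx : Summable fun i => ‖x i‖ ^ p) (hy : Summable fun i => ‖y i‖ ^ q) :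
    Summable fun i => x i * y i :=
  .of_norm <| (Real.summable_mul_of_Lp_Lq_of_nonneg hpq (fun _ => norm_nonneg _)
      (fun _ => norm_nonneg _) hx hy).of_nonneg_of_le (fun _ => norm_nonneg _)
    (fun _ => norm_mul_le _ _)

theorem tsum_apply_comp_comm_of_hasSum_expansion {ι 𝕜 E : Type*} [NormedField 𝕜]
    [NormedAddCommGroup E] [NormedSpace 𝕜 E] {e : ι → E} {f : ι → StrongDual 𝕜 E}
    (hexp : ∀ (u : E) (g : StrongDual 𝕜 E), HasSum (fun j => f j u * g (e j)) (g u))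
    {S T : E →L[𝕜] E}
    (hST : Summable fun ij : ι × ι => f ij.2 (S (e ij.1)) * f ij.1 (T (e ij.2))) :
    ∑' i, f i (T (S (e i))) = ∑' i, f i (S (T (e i))) := by
  have hrow : ∀ i, HasSum (fun j => f j (S (e i)) * f i (T (e j))) (f i (T (S (e i)))) :=
    fun i => hexp (S (e i)) ((f i).comp T)
  have hcol : ∀ j, HasSum (fun i => f j (S (e i)) * f i (T (e j))) (f j (S (T (e j)))) :=
    fun j => by
      simpa only [ContinuousLinearMap.comp_apply, mul_comm] using hexp (T (e j)) ((f j).comp S)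
  calc ∑' i, f i (T (S (e i)))
      = ∑' (i) (j), f j (S (e i)) * f i (T (e j)) := tsum_congr fun i => (hrow i).tsum_eq.symm
    _ = ∑' (j) (i), f j (S (e i)) * f i (T (e j)) :=
      (hST.tsum_comm' (f := fun i j => f j (S (e i)) * f i (T (e j)))
        (fun i => (hrow i).summable) fun j => (hcol j).summable).symm
    _ = ∑' j, f j (S (T (e j))) := tsum_congr fun j => (hcol j).tsum_eq

theorem stmt5_general {E : Type*} [NormedAddCommGroup E] [NormedSpace ℂ E]
    (e : ℕ → E) (f : ℕ → StrongDual ℂ E)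
    (p q : ℝ) (hp : 1 < p) (hpq : 1 / p + 1 / q = 1)
    -- B-condition:
    (hexp : ∀ (u : E) (g : StrongDual ℂ E),
      HasSum (fun j => f j u * g (e j)) (g u))
    (A B : E →L[ℂ] E)
    (hA : Summable fun ij : ℕ × ℕ => ‖f ij.2 (A (e ij.1))‖ ^ p)
    (hB : Summable fun ij : ℕ × ℕ => ‖f ij.2 (B (e ij.1))‖ ^ q) :
    ∑' i, f i (B (A (e i))) = ∑' i, f i (A (B (e i))) := by
  have hpq' : p.HolderConjugate q :=
    Real.holderConjugate_iff.mpr ⟨hp, by simpa only [one_div] using hpq⟩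
  exact tsum_apply_comp_comm_of_hasSum_expansion hexp
    (summable_mul_of_summable_norm_rpow hpq' hA hB.prod_symm)

/-- Symmetry of the bilinear trace: `Tr(A,B) = ∑ ⟨A e_i, B* f_i⟩ = ∑ ⟨B e_i, A* f_i⟩`
for `A ∈ σ_p(E)`, `B ∈ σ_q(E)`, `1/p + 1/q = 1`, in a Banach space satisfying the
B-condition. Here `⟨A e_i, B* f_i⟩ = f_i (B (A e_i))`. -/
theorem stmt5 {E : Type*} [NormedAddCommGroup E] [NormedSpace ℂ E]
    (e : ℕ → E) (f : ℕ → StrongDual ℂ E)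
    (hbi : ∀ i j, f i (e j) = if i = j then 1 else 0)
    (hne : ∀ j, ‖e j‖ = 1) (hnf : ∀ j, ‖f j‖ = 1)
    (p q C : ℝ) (hp : 1 < p) (hq : 1 < q) (hpq : 1 / p + 1 / q = 1) (hC : 0 < C)
    -- B-condition:
    (hexp : ∀ (u : E) (g : StrongDual ℂ E),
      HasSum (fun j => f j u * g (e j)) (g u))
    (hBcond : ∀ u : E, ‖u‖ ^ p ≤ C * ∑' j, ‖f j u‖ ^ p)
    (A B : E →L[ℂ] E)
    (hA : Summable fun ij : ℕ × ℕ => ‖f ij.2 (A (e ij.1))‖ ^ p)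
    (hB : Summable fun ij : ℕ × ℕ => ‖f ij.2 (B (e ij.1))‖ ^ q) :
    ∑' i, f i (B (A (e i))) = ∑' i, f i (A (B (e i))) :=
  stmt5_general e f p q hp hpq hexp A B hA hB
end
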